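/- arXiv:0912.0300 — 3 statements merged into one kernel-verified Lean document; each statement's English description precedes it below -/
import Mathlib

section
/- Let ω be a normalized 3-cocycle on a finite group Ḡ with values in ℂ*, and define θ_g(x,y) = ω(g,x,y)ω(x,y,g^{xy})/ω(x,g,y^g) for g,x,y ∈ Ḡ. Then for each fixed g ∈ Ḡ, the restriction of θ_g to the centralizer C_{Ḡ}(g) is a 2-cocycle on C_{Ḡ}(g) with values in ℂ*. -/
/-!
On the centralizer of `g` all the conjugations in `θ_g` are trivial, so there
`θ_g(x, y) = ω(g, x, y) ω(x, y, g) / ω(x, g, y)`. Writing `dω(a, b, c, d)` for the quotient of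
the two sides of the 3-cocycle identity, the coboundary of this 2-cochain at `(x, y, z)` is
the product `dω(g, x, y, z) dω(x, g, y, z)⁻¹ dω(x, y, g, z) dω(x, y, z, g)⁻¹` of trivial
factors: as `g` travels from the first slot to the last, the terms in which it sits next to
one of `x`, `y`, `z` cancel because `g` commutes with them.
-/

/-- The right conjugate `a^b = b⁻¹ * a * b`. -/
def conjR {H : Type*} [Group H] (a b : H) : H := b⁻¹ * a * b

/-- The 2-cochain `θ_g` associated to a 3-cocycle `ω`. -/
def thetaCochain {H : Type*} [Group H] (ω : H → H → H → ℂˣ) (g x y : H) : ℂˣ :=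
  ω g x y * ω x y (conjR g (x * y)) * (ω x g (conjR y g))⁻¹

section

variable {G M : Type*} [Group G] [CommGroup M]

def IsThreeCocycle (ω : G → G → G → M) : Prop :=
  ∀ a b c d : G, ω a b c * ω a (b * c) d * ω b c d = ω (a * b) c d * ω a b (c * d)

def centralTheta (ω : G → G → G → M) (g x y : G) : M :=
  ω g x y * ω x y g / ω x g y

theorem conjR_eq_self_of_commute {a b : G} (h : Commute a b) : conjR a b = a :=
  h.symm.inv_mul_cancel

theorem centralTheta_cocycle_identity {ω : G → G → G → M} (hω : IsThreeCocycle ω) {g x y z : G}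
    (hx : Commute g x) (hy : Commute g y) (hz : Commute g z) :
    centralTheta ω g x y * centralTheta ω g (x * y) z
      = centralTheta ω g y z * centralTheta ω g x (y * z) := by
  have hgxyz := hω g x y z
  have hxgyz := hω x g y z
  have hxygz := hω x y g z
  have hxyzg := hω x y z g
  rw [hx.eq] at hgxyz
  rw [hy.eq] at hxgyz
  rw [hz.eq] at hxygz
  apply_fun Additive.ofMul at hgxyz hxgyz hxygz hxyzg ⊢
  simp only [centralTheta, ofMul_mul, ofMul_div] at *
  linear_combination (norm := abel) hgxyz - hxgyz + hxygz - hxyzg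

theorem thetaCochain_of_commute (ω : G → G → G → ℂˣ) {g x y : G}
    (hx : Commute g x) (hy : Commute g y) :
    thetaCochain ω g x y = centralTheta ω g x y := by
  rw [thetaCochain, centralTheta, conjR_eq_self_of_commute (hx.mul_right hy),
    conjR_eq_self_of_commute hy.symm, div_eq_mul_inv]

end

theorem theta_is_two_cocycle_on_centralizer_general (Gbar : Type*) [Group Gbar]
    (ω : Gbar → Gbar → Gbar → ℂˣ)
    (hcoc : ∀ a b c d : Gbar,
      ω a b c * ω a (b * c) d * ω b c d = ω (a * b) c d * ω a b (c * d))
    (hnorm : ∀ a b : Gbar, ω 1 a b = 1 ∧ ω a 1 b = 1 ∧ ω a b 1 = 1)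
    (g : Gbar) :
    (∀ x y z : Gbar, x ∈ Subgroup.centralizer {g} → y ∈ Subgroup.centralizer {g} →
        z ∈ Subgroup.centralizer {g} →
      thetaCochain ω g x y * thetaCochain ω g (x * y) z
        = thetaCochain ω g y z * thetaCochain ω g x (y * z)) ∧
    (∀ x : Gbar, x ∈ Subgroup.centralizer {g} →
      thetaCochain ω g 1 x = 1 ∧ thetaCochain ω g x 1 = 1) := by
  refine ⟨fun x y z hx hy hz => ?_, fun x _ => ?_⟩
  · have hgx : Commute g x := (Subgroup.mem_centralizer_singleton_iff.mp hx).symm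
    have hgy : Commute g y := (Subgroup.mem_centralizer_singleton_iff.mp hy).symm
    have hgz : Commute g z := (Subgroup.mem_centralizer_singleton_iff.mp hz).symm
    rw [thetaCochain_of_commute ω hgx hgy, thetaCochain_of_commute ω (hgx.mul_right hgy) hgz,
      thetaCochain_of_commute ω hgy hgz, thetaCochain_of_commute ω hgx (hgy.mul_right hgz)]
    exact centralTheta_cocycle_identity hcoc hgx hgy hgz
  · simp [thetaCochain, conjR, hnorm]

/-- if `ω` is a normalized 3-cocycle on a finite group `Ḡ` valued in `ℂ*`,
then for each `g`, the restriction of `θ_g` to the centralizer `C_Ḡ(g)` is a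
(normalized) 2-cocycle valued in `ℂ*`. -/
theorem theta_is_two_cocycle_on_centralizer (Gbar : Type*) [Group Gbar] [Fintype Gbar]
    (ω : Gbar → Gbar → Gbar → ℂˣ)
    (hcoc : ∀ a b c d : Gbar,
      ω a b c * ω a (b * c) d * ω b c d = ω (a * b) c d * ω a b (c * d))
    (hnorm : ∀ a b : Gbar, ω 1 a b = 1 ∧ ω a 1 b = 1 ∧ ω a b 1 = 1)
    (g : Gbar) :
    (∀ x y z : Gbar, x ∈ Subgroup.centralizer {g} → y ∈ Subgroup.centralizer {g} →
        z ∈ Subgroup.centralizer {g} →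
      thetaCochain ω g x y * thetaCochain ω g (x * y) z
        = thetaCochain ω g y z * thetaCochain ω g x (y * z)) ∧
    (∀ x : Gbar, x ∈ Subgroup.centralizer {g} →
      thetaCochain ω g 1 x = 1 ∧ thetaCochain ω g x 1 = 1) :=
  theta_is_two_cocycle_on_centralizer_general Gbar ω hcoc hnorm g
end

section
/- With D = D^{ω'}(G) the twisted quantum double of G (with ω' inflated from a 3-cocycle ω on Ḡ = G/N), the linear map φ : D^ω(G,N) → D defined by φ(e(ḡ)⊗x) = Σ_{n∈N} e(gn)⊗x is an injective algebra homomorphism. -/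
variable {G : Type*} [Group G] [Fintype G] [DecidableEq G]
  (N : Subgroup G) [N.Normal]

/-- The product of the generalized twisted quantum double `D^ω(G,N)` on coordinate
functions with respect to the basis `{e(ḡ) ⊗ x}`:
`(e(ḡ)⊗x)(e(h̄)⊗y) = δ_{ḡ^x,h̄} θ_ḡ(x̄,ȳ) e(ḡ)⊗xy`. -/
noncomputable def gtqdMul (ω : G ⧸ N → G ⧸ N → G ⧸ N → ℂˣ)
    (f h : (G ⧸ N) × G → ℂ) : (G ⧸ N) × G → ℂ :=
  fun p => ∑ x : G,
    f (p.1, x) * (thetaCochain ω p.1 (x : G ⧸ N) ((x⁻¹ * p.2 : G) : G ⧸ N) : ℂ)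
      * h (conjR p.1 (x : G ⧸ N), x⁻¹ * p.2)

/-- The product of the twisted quantum double `D^{ω'}(G)` where `ω'` is the inflation
to `G` of the 3-cocycle `ω` on `G/N` (so `θ'_g(x,y) = θ_ḡ(x̄,ȳ)`), on coordinate
functions with respect to the basis `{e(g) ⊗ x}`. -/
noncomputable def tqdInflMul (ω : G ⧸ N → G ⧸ N → G ⧸ N → ℂˣ)
    (f h : G × G → ℂ) : G × G → ℂ :=
  fun p => ∑ x : G,
    f (p.1, x) * (thetaCochain ω (p.1 : G ⧸ N) (x : G ⧸ N) ((x⁻¹ * p.2 : G) : G ⧸ N) : ℂ)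
      * h (conjR p.1 x, x⁻¹ * p.2)

/-- The map `φ : D^ω(G,N) → D^{ω'}(G)`, `e(ḡ)⊗x ↦ Σ_{n∈N} e(gn)⊗x`, on coordinate
functions. -/
def gtqdToTqd (f : (G ⧸ N) × G → ℂ) : G × G → ℂ :=
  fun p => f ((p.1 : G ⧸ N), p.2)

theorem map_conjR {H K : Type*} [Group H] [Group K] (f : H →* K) (a b : H) :
    f (conjR a b) = conjR (f a) (f b) := by
  simp only [conjR, map_mul, map_inv]

omit [Fintype G] [DecidableEq G] [N.Normal] in
theorem gtqdToTqd_injective : Function.Injective (gtqdToTqd N) := by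
  intro f h hfh
  funext ⟨q, x⟩
  obtain ⟨g, rfl⟩ := QuotientGroup.mk_surjective q
  exact congrFun hfh (g, x)

omit [DecidableEq G] in
theorem gtqdToTqd_gtqdMul (ω : G ⧸ N → G ⧸ N → G ⧸ N → ℂˣ) (f h : (G ⧸ N) × G → ℂ) :
    gtqdToTqd N (gtqdMul N ω f h) = tqdInflMul N ω (gtqdToTqd N f) (gtqdToTqd N h) := by
  funext p
  refine Finset.sum_congr rfl fun x _ => ?_
  simp only [gtqdToTqd, ← QuotientGroup.mk'_apply N, map_conjR]

theorem gtqdToTqd_injective_algHom (ω : G ⧸ N → G ⧸ N → G ⧸ N → ℂˣ) :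
    Function.Injective (gtqdToTqd N) ∧
    (∀ f h : (G ⧸ N) × G → ℂ,
      gtqdToTqd N (gtqdMul N ω f h) = tqdInflMul N ω (gtqdToTqd N f) (gtqdToTqd N h)) ∧
    (∀ f h : (G ⧸ N) × G → ℂ, gtqdToTqd N (f + h) = gtqdToTqd N f + gtqdToTqd N h) ∧
    (∀ (c : ℂ) (f : (G ⧸ N) × G → ℂ), gtqdToTqd N (c • f) = c • gtqdToTqd N f) ∧
    gtqdToTqd N (fun p => if p.2 = 1 then (1 : ℂ) else 0)
      = fun p : G × G => if p.2 = 1 then (1 : ℂ) else 0 :=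
  ⟨gtqdToTqd_injective N, gtqdToTqd_gtqdMul N ω, fun _ _ => rfl, fun _ _ => rfl, rfl⟩
end

section
/- Let G be a finite group, f, g ∈ G, and let U be an irreducible representation of C_G(f) and V an irreducible representation of C_G(g), with induced G-class functions χ̂_U and χ̂_V supported on pairs (h,x) where h is conjugate to f (resp. g) and x centralizes h. If f and g are not conjugate in G, then the inner product ⟨χ̂_U, χ̂_V⟩ := (1/|G|) Σ_{k∈G} Σ_{x∈G} [k = wfw⁻¹][k = ygy⁻¹][x ∈ wC_G(f)w⁻¹ ∩ yC_G(g)y⁻¹] χ_U(w⁻¹xw)\overline{χ_V(y⁻¹xy)} is zero; if f = g, it equals ⟨χ_U, χ_V⟩_{C_G(f)} = δ_{U,V}. -/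
/-!
If `f` and `g` are not conjugate, no `k` is conjugate to both and every summand vanishes. For `k`
conjugate to `f`, the substitution `x ↦ (w k)⁻¹ x (w k)` turns the inner sum into
`∑ t ∈ C_G(f), χ_U(t) conj χ_V'(t)`, and there are `|G| / |C_G(f)|` such `k`. Orthonormality over
`C_G(f)` is `FDRep.char_orthonormal` once `conj χ(t) = χ(t⁻¹)`, which holds because averaging
`ρ(u)ᴴ ρ(u)` over the group gives a positive definite `P` with `ρ(t)ᴴ P ρ(t) = P`, so
`ρ(t⁻¹) = P⁻¹ ρ(t)ᴴ P`.
-/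

attribute [local instance] Classical.propDecidable

open CategoryTheory

open Matrix ComplexOrder in
theorem Matrix.trace_map_inv_eq_star {H n 𝕜 : Type*} [Group H] [Fintype H] [Fintype n]
    [DecidableEq n] [RCLike 𝕜] (φ : H →* Matrix n n 𝕜) (t : H) :
    (φ t⁻¹).trace = star (φ t).trace := by
  have hP_posDef : (∑ u, (φ u)ᴴ * φ u).PosDef := by
    rw [← Finset.add_sum_erase _ _ (Finset.mem_univ 1), map_one, conjTranspose_one, one_mul]
    exact PosDef.one.add_posSemidef
      (posSemidef_sum _ fun u _ => posSemidef_conjTranspose_mul_self _)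
  set P := ∑ u, (φ u)ᴴ * φ u
  have hP_invariant : (φ t)ᴴ * P * φ t = P := by
    simp only [P, Finset.mul_sum, Finset.sum_mul]
    exact Fintype.sum_equiv (Equiv.mulRight t) _ _ fun u => by
      simp [conjTranspose_mul, mul_assoc]
  have hP_intertwines : P * φ t⁻¹ = (φ t)ᴴ * P := by
    calc P * φ t⁻¹ = (φ t)ᴴ * P * φ t * φ t⁻¹ := by rw [hP_invariant]
      _ = (φ t)ᴴ * P := by rw [mul_assoc _ (φ t), ← map_mul, mul_inv_cancel, map_one, mul_one]
  have := hP_posDef.isUnit.invertible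
  calc (φ t⁻¹).trace = (⅟P * (P * φ t⁻¹)).trace := by rw [← mul_assoc, invOf_mul_self, one_mul]
    _ = ((φ t)ᴴ * P * ⅟P).trace := by rw [hP_intertwines, trace_mul_comm, mul_assoc]
    _ = star (φ t).trace := by rw [mul_assoc, mul_invOf_self, mul_one, trace_conjTranspose]

theorem FDRep.char_inv {H 𝕜 : Type*} [Group H] [Fintype H] [RCLike 𝕜] (W : FDRep 𝕜 H) (t : H) :
    W.character t⁻¹ = starRingEnd 𝕜 (W.character t) := by
  let b := Module.Free.chooseBasis 𝕜 W
  let φ := (LinearMap.toMatrixAlgEquiv b).toMonoidHom.comp W.ρ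
  have hχ (u : H) : W.character u = (φ u).trace := LinearMap.trace_eq_matrix_trace 𝕜 b (W.ρ u)
  rw [hχ, hχ]
  exact Matrix.trace_map_inv_eq_star φ t

theorem FDRep.char_orthonormal_star {H : Type} [Group H] [Fintype H] (U V : FDRep ℂ H)
    [Simple U] [Simple V] :
    (1 / (Fintype.card H : ℂ)) * ∑ t : H, U.character t * starRingEnd ℂ (V.character t) =
      if Nonempty (U ≅ V) then 1 else 0 := by
  have : Invertible (Nat.card H : ℂ) := invertibleOfNonzero (by simp)
  simp_rw [← FDRep.char_inv, one_div, ← Nat.card_eq_fintype_card]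
  exact_mod_cast FDRep.char_orthonormal U V

theorem sum_dite_conj_mem {G M : Type*} [Group G] [Fintype G] [AddCommMonoid M]
    (C : Subgroup G) (w : G) (F : C → M) :
    ∑ x : G, (if h : w⁻¹ * x * w ∈ C then F ⟨_, h⟩ else 0) = ∑ t : C, F t := by
  rw [Fintype.sum_equiv (MulAut.conj w⁻¹).toEquiv _ (fun z => if h : z ∈ C then F ⟨z, h⟩ else 0)
    (fun x => by simp), ← Fintype.sum_subtype_add_sum_subtype (· ∈ C),
    Fintype.sum_eq_zero (α := {z // z ∉ C}) _ fun z => dif_neg z.2, add_zero]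
  exact Fintype.sum_congr _ _ fun t => dif_pos t.2

theorem card_isConj_mul_card_centralizer {G : Type*} [Group G] [Fintype G] (f : G) :
    Fintype.card {k : G // IsConj f k} * Fintype.card (Subgroup.centralizer ({f} : Set G)) =
      Fintype.card G := by
  simp only [← Nat.card_eq_fintype_card]
  rw [Subgroup.nat_card_centralizer_nat_card_stabilizer]
  change _ = Nat.card (ConjAct G)
  rw [← Subgroup.index_mul_card (MulAction.stabilizer (ConjAct G) f),
    MulAction.index_stabilizer, ← Nat.card_coe_set_eq]
  congr 1
  exact Nat.card_congr (Equiv.subtypeEquivRight fun k => by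
    rw [ConjAct.mem_orbit_conjAct, isConj_comm])

theorem sum_sum_dite_conj_mem {G M : Type*} [Group G] [Fintype G] [AddCommMonoid M]
    (p : G → Prop) [DecidablePred p] (C : Subgroup G) (w : G → G) (F : C → M) :
    ∑ k : G, ∑ x : G, (if h : p k ∧ (w k)⁻¹ * x * w k ∈ C then F ⟨_, h.2⟩ else 0) =
      Fintype.card {k // p k} • ∑ t : C, F t := by
  rw [Fintype.card_subtype, ← Finset.sum_const, Finset.sum_filter]
  refine Fintype.sum_congr _ _ fun k => ?_
  by_cases hk : p k
  · simp only [hk, true_and, if_true]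
    exact sum_dite_conj_mem C (w k) F
  · simp [hk]

theorem induced_characters_orthonormal_general
    (G : Type) [Group G] [Fintype G] (f g : G)
    (U : FDRep ℂ (↥(Subgroup.centralizer ({f} : Set G))))
    (V : FDRep ℂ (↥(Subgroup.centralizer ({g} : Set G))))
    (V' : FDRep ℂ (↥(Subgroup.centralizer ({f} : Set G))))
    [Simple U] [Simple V']
    (w y : G → G) :
    (¬ IsConj f g →
      (1 / (Fintype.card G : ℂ)) * ∑ k : G, ∑ x : G,
        (if h : IsConj f k ∧ IsConj g k ∧
            (w k)⁻¹ * x * w k ∈ Subgroup.centralizer ({f} : Set G) ∧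
            (y k)⁻¹ * x * y k ∈ Subgroup.centralizer ({g} : Set G) then
          U.character ⟨(w k)⁻¹ * x * w k, h.2.2.1⟩
            * (starRingEnd ℂ) (V.character ⟨(y k)⁻¹ * x * y k, h.2.2.2⟩)
        else 0) = 0) ∧
    ((1 / (Fintype.card G : ℂ)) * ∑ k : G, ∑ x : G,
        (if h : IsConj f k ∧
            (w k)⁻¹ * x * w k ∈ Subgroup.centralizer ({f} : Set G) then
          U.character ⟨(w k)⁻¹ * x * w k, h.2⟩
            * (starRingEnd ℂ) (V'.character ⟨(w k)⁻¹ * x * w k, h.2⟩)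
        else 0)
      = (1 / (Fintype.card (↥(Subgroup.centralizer ({f} : Set G))) : ℂ)) *
          ∑ t : ↥(Subgroup.centralizer ({f} : Set G)),
            U.character t * (starRingEnd ℂ) (V'.character t)) ∧
    ((1 / (Fintype.card (↥(Subgroup.centralizer ({f} : Set G))) : ℂ)) *
        ∑ t : ↥(Subgroup.centralizer ({f} : Set G)),
          U.character t * (starRingEnd ℂ) (V'.character t)
      = if Nonempty (U ≅ V') then 1 else 0) := by
  refine ⟨fun hfg => ?_, ?_, FDRep.char_orthonormal_star U V'⟩
  · refine mul_eq_zero_of_right _ (Finset.sum_eq_zero fun k _ =>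
      Finset.sum_eq_zero fun x _ => dif_neg ?_)
    rintro ⟨hfk, hgk, -⟩
    exact hfg (hfk.trans hgk.symm)
  · have hconj : (Fintype.card {k // IsConj f k} : ℂ) ≠ 0 :=
      Nat.cast_ne_zero.mpr (Fintype.card_pos_iff.mpr ⟨⟨f, .refl f⟩⟩).ne'
    have hsum := sum_sum_dite_conj_mem (IsConj f) _ w fun t =>
      U.character t * starRingEnd ℂ (V'.character t)
    beta_reduce at hsum
    rw [hsum, nsmul_eq_mul, ← card_isConj_mul_card_centralizer f, Nat.cast_mul]
    field_simp

/-- orthonormality of the induced class functions `χ̂_U, χ̂_V` attached to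
irreducible representations `U` of `C_G(f)` and `V` of `C_G(g)`: their inner product
vanishes if `f` and `g` are not conjugate, and for `f = g` it equals the inner product
`⟨χ_U, χ_V⟩` over `C_G(f)`, which is `δ_{U,V}`. -/
theorem induced_characters_orthonormal
    (G : Type) [Group G] [Fintype G] (f g : G)
    (U : FDRep ℂ (↥(Subgroup.centralizer ({f} : Set G))))
    (V : FDRep ℂ (↥(Subgroup.centralizer ({g} : Set G))))
    (V' : FDRep ℂ (↥(Subgroup.centralizer ({f} : Set G))))
    [Simple U] [Simple V] [Simple V']
    (w y : G → G)
    (hw : ∀ k : G, IsConj f k → k = w k * f * (w k)⁻¹)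
    (hy : ∀ k : G, IsConj g k → k = y k * g * (y k)⁻¹) :
    (¬ IsConj f g →
      (1 / (Fintype.card G : ℂ)) * ∑ k : G, ∑ x : G,
        (if h : IsConj f k ∧ IsConj g k ∧
            (w k)⁻¹ * x * w k ∈ Subgroup.centralizer ({f} : Set G) ∧
            (y k)⁻¹ * x * y k ∈ Subgroup.centralizer ({g} : Set G) then
          U.character ⟨(w k)⁻¹ * x * w k, h.2.2.1⟩
            * (starRingEnd ℂ) (V.character ⟨(y k)⁻¹ * x * y k, h.2.2.2⟩)
        else 0) = 0) ∧
    ((1 / (Fintype.card G : ℂ)) * ∑ k : G, ∑ x : G,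
        (if h : IsConj f k ∧
            (w k)⁻¹ * x * w k ∈ Subgroup.centralizer ({f} : Set G) then
          U.character ⟨(w k)⁻¹ * x * w k, h.2⟩
            * (starRingEnd ℂ) (V'.character ⟨(w k)⁻¹ * x * w k, h.2⟩)
        else 0)
      = (1 / (Fintype.card (↥(Subgroup.centralizer ({f} : Set G))) : ℂ)) *
          ∑ t : ↥(Subgroup.centralizer ({f} : Set G)),
            U.character t * (starRingEnd ℂ) (V'.character t)) ∧
    ((1 / (Fintype.card (↥(Subgroup.centralizer ({f} : Set G))) : ℂ)) *
        ∑ t : ↥(Subgroup.centralizer ({f} : Set G)),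
          U.character t * (starRingEnd ℂ) (V'.character t)
      = if Nonempty (U ≅ V') then 1 else 0) :=
  induced_characters_orthonormal_general G f g U V V' w y
end
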